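/- (Mixing time of the ε-SCA.) Fix ε ∈ (0,1] and β ≥ 0, set r = (1−ε) + ε · max_{u∈V} ∑_{y∈V} tanh(β |J_{u,y}| / 2), and assume 0 < r < 1. Let π be any probability distribution on {-1,+1}^V that is stationary for the ε-SCA kernel, i.e. ∑_σ π(σ) P_{β,ε}(σ,τ) = π(τ) for all τ. Then for every δ > 0 and every t ≥ ⌈(log|V| − log δ)/log(1/r)⌉, one has max_{σ ∈ {-1,+1}^V} ‖P^t_{β,ε}(σ,·) − π‖_TV ≤ δ, where ‖μ−ν‖_TV = (1/2) ∑_{η ∈ {-1,+1}^V} |μ(η) − ν(η)|. In particular, the mixing time t_mix(δ) = min{t : max_σ ‖P^t_{β,ε}(σ,·) − π‖_TV ≤ δ} satisfies t_mix(δ) ≤ ⌈(log|V| − log δ)/log(1/r)⌉. -/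

import Mathlib

/-! One ε-SCA step resamples all spins independently, so the row `P(σ, ·)` is the product of
one-spin laws, and `p_x(σ) = (1 - σ_x tanh((β/2) h̃_x(σ))) / 2`. Changing the spin at `y`
moves the law at `y` by `1 - ε` (`p_y` becomes `1 - p_y` since `J_{yy} = 0`) and the law at
`x ≠ y` by at most `ε tanh(β |J_{xy}| / 2)`, because `|tanh a - tanh b| ≤ 2 tanh(|a - b| / 2)`.
Exchanging the one-spin laws one site at a time, `P` maps a function that changes by at most
`L` under any single spin flip to one that changes by at most `r L` (Dobrushin's contraction).
Applied to indicators, `P^t` has rows at total variation distance at most `|V| r^t` from each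
other, and averaging over the stationary `π` gives the same bound for `‖P^t(σ, ·) - π‖_TV`.
Finally `|V| r^t ≤ δ` once `t ≥ (log |V| - log δ) / log (1 / r)`. -/

open Real Finset

variable {V : Type*}

/-- The real value of a Boolean spin: `true ↦ +1`, `false ↦ -1`. -/
def sp (b : Bool) : ℝ := if b then 1 else -1

/-- The cavity field `h̃_x(σ) = ∑_y J_{x,y} σ_y + h_x`. -/
noncomputable def cavity [Fintype V] (J : V → V → ℝ) (h : V → ℝ) (σ : V → Bool) (x : V) : ℝ :=
  (∑ y, J x y * sp (σ y)) + h x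

/-- The ε-SCA flip probability `p_x(σ) = e^{-(β/2) h̃_x(σ) σ_x} / (2 cosh((β/2) h̃_x(σ)))`. -/
noncomputable def flipProb [Fintype V] (J : V → V → ℝ) (h : V → ℝ) (β : ℝ)
    (σ : V → Bool) (x : V) : ℝ :=
  Real.exp (-(β / 2) * cavity J h σ x * sp (σ x)) / (2 * Real.cosh ((β / 2) * cavity J h σ x))

/-- The ε-SCA transition kernel
`P_{β,ε}(σ,τ) = ∏_{x : τ_x = -σ_x} ε p_x(σ) · ∏_{y : τ_y = σ_y} (1 - ε p_y(σ))`. -/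
noncomputable def Peps [Fintype V] [DecidableEq V] (J : V → V → ℝ) (h : V → ℝ) (β ε : ℝ)
    (σ τ : V → Bool) : ℝ :=
  (∏ x ∈ univ.filter (fun x => τ x ≠ σ x), ε * flipProb J h β σ x) *
    ∏ y ∈ univ.filter (fun y => τ y = σ y), (1 - ε * flipProb J h β σ y)

/-- The t-fold product (t-step transition probabilities) of a kernel P on configurations. -/
noncomputable def kpow [Fintype V] [DecidableEq V]
    (P : (V → Bool) → (V → Bool) → ℝ) : ℕ → (V → Bool) → (V → Bool) → ℝ
  | 0 => fun σ τ => if σ = τ then 1 else 0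
  | n + 1 => fun σ τ => ∑ η, P σ η * kpow P n η τ

/-- Total variation distance `‖μ−ν‖_TV = (1/2) ∑_η |μ(η) − ν(η)|`. -/
noncomputable def tvDist [Fintype V] [DecidableEq V] (μ ν : (V → Bool) → ℝ) : ℝ :=
  (1 / 2) * ∑ η, |μ η - ν η|

open Matrix

namespace Real

theorem abs_tanh_sub_tanh_le (a b : ℝ) :
    |tanh a - tanh b| ≤ 2 * tanh (|a - b| / 2) := by
  set d := |a - b|
  have hA := cosh_pos a
  have hB := cosh_pos b
  have hC := cosh_pos (d / 2)
  have hS : 0 ≤ sinh (d / 2) := sinh_nonneg_iff.2 (by positivity)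
  have hdiff : |tanh a - tanh b| = sinh d / (cosh a * cosh b) := by
    rw [tanh_eq_sinh_div_cosh, tanh_eq_sinh_div_cosh, div_sub_div _ _ hA.ne' hB.ne', ← sinh_sub,
      abs_div, abs_sinh, abs_of_pos (mul_pos hA hB)]
  -- `cosh a cosh b = (cosh (a + b) + cosh (a - b)) / 2 ≥ (1 + cosh d) / 2 = cosh² (d / 2)`
  have hprod : cosh (d / 2) ^ 2 ≤ cosh a * cosh b := by
    have hd : cosh (a - b) = 2 * cosh (d / 2) ^ 2 - 1 := by
      rw [← cosh_abs, show |a - b| = 2 * (d / 2) by ring, cosh_two_mul, cosh_sq]; ring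
    nlinarith [one_le_cosh (a + b), cosh_add a b, cosh_sub a b]
  have hsinh : sinh d = 2 * sinh (d / 2) * cosh (d / 2) := by
    rw [← sinh_two_mul]; ring_nf
  rw [hdiff, hsinh, tanh_eq_sinh_div_cosh, div_le_iff₀ (mul_pos hA hB)]
  calc 2 * sinh (d / 2) * cosh (d / 2)
      = 2 * (sinh (d / 2) / cosh (d / 2)) * cosh (d / 2) ^ 2 := by field_simp
    _ ≤ 2 * (sinh (d / 2) / cosh (d / 2)) * (cosh a * cosh b) := by gcongr

end Real

theorem abs_sp (b : Bool) : |sp b| = 1 := by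
  cases b <;> simp [sp]

theorem stdSimplex_bool_sub {p q : Bool → ℝ} (hp : p ∈ stdSimplex ℝ Bool)
    (hq : q ∈ stdSimplex ℝ Bool) (b : Bool) : p b - q b = (p true - q true) * sp b := by
  have hp1 := hp.2
  have hq1 := hq.2
  rw [Fintype.sum_bool] at hp1 hq1
  cases b <;> simp only [sp, Bool.false_eq_true, if_false, if_true] <;> linarith

theorem abs_sub_stdSimplex_bool {p q : Bool → ℝ} (hp : p ∈ stdSimplex ℝ Bool)
    (hq : q ∈ stdSimplex ℝ Bool) (b : Bool) : |p b - q b| = |p true - q true| := by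
  rw [stdSimplex_bool_sub hp hq b, abs_mul, abs_sp, mul_one]

section FlipLipschitz

variable [DecidableEq V]

/-- `f` changes by at most `L` when a single spin is changed; equivalently, `f` is
`L`-Lipschitz for the Hamming distance. -/
def FlipLipschitzWith (L : ℝ) (f : (V → Bool) → ℝ) : Prop :=
  ∀ (σ : V → Bool) (x : V) (b : Bool), |f (Function.update σ x b) - f σ| ≤ L

theorem flipLipschitzWith_one_of_mem_Icc {f : (V → Bool) → ℝ}
    (hf : ∀ σ, f σ ∈ Set.Icc 0 1) : FlipLipschitzWith 1 f := fun σ x b => by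
  obtain ⟨h₀, h₁⟩ := hf σ
  obtain ⟨h₀', h₁'⟩ := hf (Function.update σ x b)
  exact abs_sub_le_iff.2 ⟨by linarith, by linarith⟩

variable [Fintype V]

theorem FlipLipschitzWith.abs_sub_le_card_mul {L : ℝ} {f : (V → Bool) → ℝ}
    (hf : FlipLipschitzWith L f) (σ σ' : V → Bool) :
    |f σ' - f σ| ≤ Fintype.card V * L := by
  have key : ∀ s : Finset V, |f (s.piecewise σ' σ) - f σ| ≤ #s * L := by
    intro s
    induction s using Finset.induction_on with
    | empty => simp
    | insert a s ha ih =>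
      rw [Finset.piecewise_insert, card_insert_of_notMem ha, Nat.cast_succ, add_one_mul]
      calc _ ≤ |f (Function.update (s.piecewise σ' σ) a (σ' a)) - f (s.piecewise σ' σ)|
              + |f (s.piecewise σ' σ) - f σ| := abs_sub_le _ _ _
        _ ≤ L + #s * L := add_le_add (hf _ _ _) ih
        _ = #s * L + L := add_comm _ _
  simpa using key univ

/-- Expectation of `f` under the product of the one-spin laws `g x`. -/
noncomputable def prodExpect (g : V → Bool → ℝ) (f : (V → Bool) → ℝ) : ℝ :=
  ∑ τ, (∏ x, g x (τ x)) * f τ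

theorem abs_sum_sp_mul_le {x₀ : V} {w : (V → Bool) → ℝ} (hw0 : ∀ τ, 0 ≤ w τ)
    (hw : ∀ τ b, w (Function.update τ x₀ b) = w τ) (hw2 : ∑ τ, w τ = 2)
    {L : ℝ} {f : (V → Bool) → ℝ} (hf : FlipLipschitzWith L f) :
    |∑ τ, sp (τ x₀) * (w τ * f τ)| ≤ L := by
  set flip : (V → Bool) → (V → Bool) := fun τ => Function.update τ x₀ (!τ x₀)
  have hflip : Function.Involutive flip := fun τ => by simp [flip]
  have hsp : ∀ τ, sp (flip τ x₀) = -sp (τ x₀) := fun τ => by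
    cases h : τ x₀ <;> simp [flip, sp, h]
  -- pairing `τ` with `flip τ` antisymmetrizes the sum
  have htwice : 2 * ∑ τ, sp (τ x₀) * (w τ * f τ)
      = ∑ τ, sp (τ x₀) * (w τ * (f τ - f (flip τ))) := by
    rw [two_mul]
    nth_rewrite 2 [← hflip.bijective.sum_comp]
    rw [← sum_add_distrib]
    refine sum_congr rfl fun τ _ => ?_
    rw [hsp, hw]
    ring
  have hbound : |2 * ∑ τ, sp (τ x₀) * (w τ * f τ)| ≤ 2 * L := by
    rw [htwice, ← hw2, sum_mul]
    refine (abs_sum_le_sum_abs _ _).trans (sum_le_sum fun τ _ => ?_)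
    rw [abs_mul, abs_mul, abs_sp, one_mul, abs_of_nonneg (hw0 τ), abs_sub_comm]
    exact mul_le_mul_of_nonneg_left (hf τ x₀ _) (hw0 τ)
  rw [abs_mul, abs_two] at hbound
  linarith

theorem abs_prodExpect_update_sub_le {g : V → Bool → ℝ}
    (hg : ∀ x, g x ∈ stdSimplex ℝ Bool) (x₀ : V) {q : Bool → ℝ}
    (hq : q ∈ stdSimplex ℝ Bool) {L : ℝ} {f : (V → Bool) → ℝ}
    (hf : FlipLipschitzWith L f) :
    |prodExpect (Function.update g x₀ q) f - prodExpect g f| ≤ |q true - g x₀ true| * L := by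
  set w : (V → Bool) → ℝ := fun τ => ∏ x ∈ univ.erase x₀, g x (τ x)
  have hsplit : ∀ (p : Bool → ℝ) τ,
      ∏ x, Function.update g x₀ p x (τ x) = p (τ x₀) * w τ := by
    intro p τ
    rw [← mul_prod_erase univ _ (mem_univ x₀), Function.update_self]
    congr 1
    exact prod_congr rfl fun x hx => by rw [Function.update_of_ne (ne_of_mem_erase hx)]
  have hw2 : ∑ τ, w τ = 2 := by
    have hsum : ∀ x, ∑ b, Function.update g x₀ (fun _ => 1) x b
        = Function.update (fun _ => (1 : ℝ)) x₀ 2 x := by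
      intro x
      by_cases hx : x = x₀
      · subst hx; norm_num
      · simpa [hx] using (hg x).2
    calc ∑ τ, w τ
        = ∑ τ : V → Bool, ∏ x, Function.update g x₀ (fun _ => 1) x (τ x) := by
          simp_rw [hsplit, one_mul]
      _ = ∏ x, ∑ b, Function.update g x₀ (fun _ => 1) x b := (Fintype.prod_sum _).symm
      _ = 2 := by simp_rw [hsum]; simp [prod_update_of_mem (mem_univ x₀)]
  have hw : ∀ τ b, w (Function.update τ x₀ b) = w τ := fun τ b =>
    prod_congr rfl fun x hx => by rw [Function.update_of_ne (ne_of_mem_erase hx)]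
  have hdiff : prodExpect (Function.update g x₀ q) f - prodExpect g f
      = (q true - g x₀ true) * ∑ τ, sp (τ x₀) * (w τ * f τ) := by
    rw [prodExpect, prodExpect, ← sum_sub_distrib, mul_sum]
    refine sum_congr rfl fun τ _ => ?_
    rw [hsplit, ← Function.update_eq_self x₀ g, hsplit, Function.update_eq_self]
    linear_combination (w τ * f τ) * stdSimplex_bool_sub hq (hg x₀) (τ x₀)
  rw [hdiff, abs_mul]
  exact mul_le_mul_of_nonneg_left
    (abs_sum_sp_mul_le (fun τ => prod_nonneg fun x _ => (hg x).1 _) hw hw2 hf) (abs_nonneg _)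

theorem abs_prodExpect_sub_le {g g' : V → Bool → ℝ} (hg : ∀ x, g x ∈ stdSimplex ℝ Bool)
    (hg' : ∀ x, g' x ∈ stdSimplex ℝ Bool) {L : ℝ} {f : (V → Bool) → ℝ}
    (hf : FlipLipschitzWith L f) :
    |prodExpect g f - prodExpect g' f| ≤ (∑ x, |g x true - g' x true|) * L := by
  have hmix : ∀ (s : Finset V) x, s.piecewise g g' x ∈ stdSimplex ℝ Bool := fun s x => by
    by_cases hx : x ∈ s <;> simp [hx, hg x, hg' x]
  have key : ∀ s : Finset V,
      |prodExpect (s.piecewise g g') f - prodExpect g' f|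
        ≤ (∑ x ∈ s, |g x true - g' x true|) * L := by
    intro s
    induction s using Finset.induction_on with
    | empty => simp
    | insert a s ha ih =>
      rw [Finset.piecewise_insert, sum_insert ha, add_mul]
      have hstep := abs_prodExpect_update_sub_le (hmix s) a (hg a) hf
      rw [Finset.piecewise_eq_of_notMem _ _ _ ha] at hstep
      exact (abs_sub_le _ _ _).trans (add_le_add hstep ih)
  simpa using key univ

end FlipLipschitz

section Kernel

variable [Fintype V] (J : V → V → ℝ) (h : V → ℝ) (β ε : ℝ)

theorem flipProb_eq (σ : V → Bool) (x : V) :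
    flipProb J h β σ x = (1 - sp (σ x) * tanh (β / 2 * cavity J h σ x)) / 2 := by
  set a := β / 2 * cavity J h σ x with ha
  have hC := cosh_pos a
  cases hb : σ x
  · have : -(β / 2) * cavity J h σ x * sp false = a := by simp [sp, a]
    rw [flipProb, hb, this, ← ha, ← cosh_add_sinh, tanh_eq_sinh_div_cosh]
    simp only [sp, Bool.false_eq_true, if_false]
    field_simp
    ring
  · have : -(β / 2) * cavity J h σ x * sp true = -a := by simp [sp, a]
    rw [flipProb, hb, this, ← ha, ← cosh_sub_sinh, tanh_eq_sinh_div_cosh]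
    simp only [sp, if_true]
    field_simp

theorem flipProb_le_one (σ : V → Bool) (x : V) : flipProb J h β σ x ≤ 1 := by
  have := abs_le.1 (abs_tanh_lt_one (β / 2 * cavity J h σ x)).le
  rw [flipProb_eq]
  cases σ x <;> simp only [sp, Bool.false_eq_true, if_false, if_true] <;> linarith

/-- The law of the new spin at `x` after one ε-SCA step from `σ`. -/
noncomputable def siteLaw (σ : V → Bool) (x : V) (b : Bool) : ℝ :=
  if b = σ x then 1 - ε * flipProb J h β σ x else ε * flipProb J h β σ x

variable {ε}

theorem siteLaw_mem_stdSimplex (hε : ε ∈ Set.Icc 0 1) (σ : V → Bool) (x : V) :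
    siteLaw J h β ε σ x ∈ stdSimplex ℝ Bool := by
  have hp0 : 0 ≤ flipProb J h β σ x := by rw [flipProb]; positivity
  have hp1 := flipProb_le_one J h β σ x
  have hεp : ε * flipProb J h β σ x ≤ 1 := by nlinarith [hε.1, hε.2]
  refine ⟨fun b => ?_, ?_⟩
  · unfold siteLaw
    split_ifs
    · linarith
    · exact mul_nonneg hε.1 hp0
  · cases hb : σ x <;> simp [siteLaw, hb]

variable [DecidableEq V]

theorem Peps_eq_prod (σ τ : V → Bool) :
    Peps J h β ε σ τ = ∏ x, siteLaw J h β ε σ x (τ x) := by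
  rw [Peps, mul_comm, ← prod_filter_mul_prod_filter_not univ (fun x => τ x = σ x)]
  congr 1
  · exact prod_congr rfl fun x hx => by rw [siteLaw, if_pos (mem_filter.1 hx).2]
  · exact prod_congr rfl fun x hx => by rw [siteLaw, if_neg (mem_filter.1 hx).2]

theorem Peps_mulVec_apply (f : (V → Bool) → ℝ) (σ : V → Bool) :
    (Matrix.of (Peps J h β ε) *ᵥ f) σ = prodExpect (siteLaw J h β ε σ) f := by
  simp only [Matrix.mulVec, dotProduct, Matrix.of_apply, Peps_eq_prod, prodExpect]

theorem Peps_mem_rowStochastic (hε : ε ∈ Set.Icc 0 1) :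
    Matrix.of (Peps J h β ε) ∈ rowStochastic ℝ (V → Bool) := by
  refine mem_rowStochastic_iff_sum.2 ⟨fun σ τ => ?_, fun σ => ?_⟩
  · rw [Matrix.of_apply, Peps_eq_prod]
    exact prod_nonneg fun x _ => (siteLaw_mem_stdSimplex J h β hε σ x).1 _
  · simp_rw [Matrix.of_apply, Peps_eq_prod, ← Fintype.prod_sum,
      (siteLaw_mem_stdSimplex J h β hε σ _).2, prod_const_one]

end Kernel

section Contraction

variable [Fintype V] [DecidableEq V] (J : V → V → ℝ) (h : V → ℝ) (β : ℝ)

theorem cavity_update (σ : V → Bool) (y : V) (b : Bool) (x : V) :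
    cavity J h (Function.update σ y b) x = cavity J h σ x + J x y * (sp b - sp (σ y)) := by
  have hterm : ∀ z, J x z * sp (Function.update σ y b z)
      = J x z * sp (σ z) + if z = y then J x y * (sp b - sp (σ y)) else 0 := by
    intro z
    by_cases hz : z = y
    · subst hz; simp only [Function.update_self, if_true]; ring
    · simp [hz]
  simp only [cavity, hterm, sum_add_distrib, sum_ite_eq', mem_univ, if_true]
  ring

theorem flipProb_flip_self {y : V} (hy : J y y = 0) (σ : V → Bool) :
    flipProb J h β (Function.update σ y (!σ y)) y = 1 - flipProb J h β σ y := by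
  rw [flipProb_eq, flipProb_eq, cavity_update, hy, zero_mul, add_zero, Function.update_self]
  cases σ y <;> simp only [sp, Bool.not_false, Bool.not_true, Bool.false_eq_true, if_true,
    if_false] <;> ring

theorem abs_flipProb_flip_sub_le (hβ : 0 ≤ β) (σ : V → Bool) {x y : V} (hxy : x ≠ y) :
    |flipProb J h β (Function.update σ y (!σ y)) x - flipProb J h β σ x|
      ≤ tanh (β * |J x y| / 2) := by
  rw [flipProb_eq, flipProb_eq, Function.update_of_ne hxy]
  have hdist : |β / 2 * cavity J h (Function.update σ y (!σ y)) x - β / 2 * cavity J h σ x|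
      = β * |J x y| := by
    rw [cavity_update, ← mul_sub, add_sub_cancel_left, abs_mul, abs_mul,
      abs_of_nonneg (by positivity : 0 ≤ β / 2)]
    have hflip : |sp (!σ y) - sp (σ y)| = 2 := by cases σ y <;> norm_num [sp]
    rw [hflip]
    ring
  have key := Real.abs_tanh_sub_tanh_le (β / 2 * cavity J h (Function.update σ y (!σ y)) x)
    (β / 2 * cavity J h σ x)
  rw [hdist] at key
  rw [show ∀ s A B : ℝ, (1 - s * A) / 2 - (1 - s * B) / 2 = -(s * (A - B)) / 2 by
      intros; ring, abs_div, abs_neg, abs_mul, abs_sp, one_mul, abs_two]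
  linarith

variable {β} {ε : ℝ}

theorem sum_abs_siteLaw_flip_sub_le (hε : ε ∈ Set.Icc 0 1) (hβ : 0 ≤ β) (σ : V → Bool)
    {y : V} (hy : J y y = 0) :
    ∑ x, |siteLaw J h β ε (Function.update σ y (!σ y)) x true - siteLaw J h β ε σ x true|
      ≤ (1 - ε) + ε * ∑ x, tanh (β * |J x y| / 2) := by
  obtain ⟨σ', hσ'⟩ : ∃ σ', σ' = Function.update σ y (!σ y) := ⟨_, rfl⟩
  rw [← hσ']
  have hsite : ∀ x, |siteLaw J h β ε σ' x true - siteLaw J h β ε σ x true|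
      ≤ (if x = y then 1 - ε else 0) + ε * tanh (β * |J x y| / 2) := by
    intro x
    rw [← abs_sub_stdSimplex_bool (siteLaw_mem_stdSimplex J h β hε σ' x)
      (siteLaw_mem_stdSimplex J h β hε σ x) (σ x)]
    by_cases hxy : x = y
    · subst hxy
      have hne : σ x ≠ σ' x := by simp [hσ']
      have hp : flipProb J h β σ' x = 1 - flipProb J h β σ x :=
        hσ' ▸ flipProb_flip_self J h β hy σ
      simp only [siteLaw, if_neg hne, if_true, hp, hy, abs_zero, mul_zero, zero_div, tanh_zero,
        add_zero]
      have hdiff :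
          ε * (1 - flipProb J h β σ x) - (1 - ε * flipProb J h β σ x) = -(1 - ε) := by ring
      rw [hdiff, abs_neg, abs_of_nonneg (by linarith [hε.2])]
    · have hsame : σ x = σ' x := by rw [hσ', Function.update_of_ne hxy]
      simp only [siteLaw, ← hsame, if_true, if_neg hxy, zero_add]
      rw [show 1 - ε * flipProb J h β σ' x - (1 - ε * flipProb J h β σ x)
          = -(ε * (flipProb J h β σ' x - flipProb J h β σ x)) by ring,
        abs_neg, abs_mul, abs_of_nonneg hε.1]
      exact mul_le_mul_of_nonneg_left (hσ' ▸ abs_flipProb_flip_sub_le J h β hβ σ hxy) hε.1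
  refine (sum_le_sum fun x _ => hsite x).trans_eq ?_
  rw [sum_add_distrib, sum_ite_eq', if_pos (mem_univ y), mul_sum]

theorem Peps_mulVec_flipLipschitz (hε : ε ∈ Set.Icc 0 1) (hβ : 0 ≤ β)
    (hJ : ∀ x, J x x = 0) {r : ℝ}
    (hr : ∀ y, (1 - ε) + ε * ∑ x, tanh (β * |J x y| / 2) ≤ r)
    {L : ℝ} {f : (V → Bool) → ℝ} (hf : FlipLipschitzWith L f) :
    FlipLipschitzWith (r * L) (Matrix.of (Peps J h β ε) *ᵥ f) := by
  intro σ y b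
  have hL : 0 ≤ L := by simpa using hf σ y (σ y)
  have hcontr := (sum_abs_siteLaw_flip_sub_le J h hε hβ σ (hJ y)).trans (hr y)
  obtain rfl | rfl : b = σ y ∨ b = !σ y := by cases b <;> cases σ y <;> simp
  · simpa using mul_nonneg ((sum_nonneg fun _ _ => abs_nonneg _).trans hcontr) hL
  · rw [Peps_mulVec_apply, Peps_mulVec_apply]
    refine (abs_prodExpect_sub_le (siteLaw_mem_stdSimplex J h β hε _)
      (siteLaw_mem_stdSimplex J h β hε σ) hf).trans ?_
    exact mul_le_mul_of_nonneg_right hcontr hL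

end Contraction

theorem Matrix.vecMul_pow_of_vecMul_eq {n R : Type*} [Fintype n] [DecidableEq n] [Semiring R]
    {M : Matrix n n R} {v : n → R} (h : v ᵥ* M = v) (t : ℕ) : v ᵥ* M ^ t = v := by
  induction t with
  | zero => simp
  | succ t ih => rw [pow_succ, ← vecMul_vecMul, ih, h]

section Mixing

variable [Fintype V] [DecidableEq V]

theorem kpow_eq_pow (P : (V → Bool) → (V → Bool) → ℝ) (t : ℕ) :
    kpow P t = Matrix.of P ^ t := by
  induction t with
  | zero => ext σ τ; simp [kpow, Matrix.one_apply]
  | succ t ih => ext σ τ; simp [kpow, pow_succ', Matrix.mul_apply, ih]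

theorem FlipLipschitzWith.pow_mulVec {M : Matrix (V → Bool) (V → Bool) ℝ} {r : ℝ}
    (hM : ∀ L f, FlipLipschitzWith L f → FlipLipschitzWith (r * L) (M *ᵥ f)) (t : ℕ)
    {L : ℝ} {f : (V → Bool) → ℝ} (hf : FlipLipschitzWith L f) :
    FlipLipschitzWith (r ^ t * L) (M ^ t *ᵥ f) := by
  induction t with
  | zero => simpa using hf
  | succ t ih => simpa [pow_succ', ← Matrix.mulVec_mulVec, mul_assoc] using hM _ _ ih

theorem tvDist_eq_sum_mul_indicator {μ ν : (V → Bool) → ℝ}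
    (h : ∑ τ, μ τ = ∑ τ, ν τ) :
    tvDist μ ν = ∑ τ, (μ τ - ν τ) * if ν τ ≤ μ τ then 1 else 0 := by
  have habs : ∀ τ,
      |μ τ - ν τ|
        = 2 * ((μ τ - ν τ) * if ν τ ≤ μ τ then 1 else 0) - (μ τ - ν τ) := by
    intro τ
    split_ifs with hτ
    · rw [abs_of_nonneg (by linarith)]; ring
    · rw [abs_of_neg (by linarith)]; ring
  rw [tvDist, sum_congr rfl fun τ _ => habs τ, sum_sub_distrib, sum_sub_distrib, h, ← mul_sum]
  ring

theorem tvDist_row_le {M : Matrix (V → Bool) (V → Bool) ℝ}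
    (hM : M ∈ rowStochastic ℝ (V → Bool)) {c : ℝ}
    (hc : ∀ f, FlipLipschitzWith 1 f → FlipLipschitzWith c (M *ᵥ f)) (σ σ' : V → Bool) :
    tvDist (M σ) (M σ') ≤ Fintype.card V * c := by
  set f : (V → Bool) → ℝ := fun τ => if M σ' τ ≤ M σ τ then 1 else 0
  have hrows : ∑ τ, M σ τ = ∑ τ, M σ' τ := by
    rw [sum_row_of_mem_rowStochastic hM, sum_row_of_mem_rowStochastic hM]
  have htv : tvDist (M σ) (M σ') = (M *ᵥ f) σ - (M *ᵥ f) σ' := by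
    rw [tvDist_eq_sum_mul_indicator hrows]
    simp only [Matrix.mulVec, dotProduct, ← sum_sub_distrib, sub_mul, f]
  rw [htv]
  exact (le_abs_self _).trans
    ((hc f (flipLipschitzWith_one_of_mem_Icc fun τ => by
      dsimp only [f]; split_ifs <;> norm_num)).abs_sub_le_card_mul σ' σ)

theorem tvDist_le_of_vecMul_eq {M : Matrix (V → Bool) (V → Bool) ℝ}
    {ν : (V → Bool) → ℝ} (hν : ν ∈ stdSimplex ℝ (V → Bool)) (hstat : ν ᵥ* M = ν)
    (μ : (V → Bool) → ℝ) {c : ℝ} (hc : ∀ σ, tvDist μ (M σ) ≤ c) :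
    tvDist μ ν ≤ c := by
  have hmix : ∀ τ, μ τ - ν τ = ∑ σ, ν σ * (μ τ - M σ τ) := by
    intro τ
    simp only [mul_sub, sum_sub_distrib, ← sum_mul, hν.2, one_mul]
    rw [← congrFun hstat τ]
    rfl
  calc tvDist μ ν ≤ (1 / 2) * ∑ τ, ∑ σ, ν σ * |μ τ - M σ τ| := by
        rw [tvDist]
        gcongr with τ
        rw [hmix]
        refine (abs_sum_le_sum_abs _ _).trans_eq (sum_congr rfl fun σ _ => ?_)
        rw [abs_mul, abs_of_nonneg (hν.1 σ)]
    _ = ∑ σ, ν σ * tvDist μ (M σ) := by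
        simp only [tvDist, mul_sum]
        rw [sum_comm]
        exact sum_congr rfl fun σ _ => sum_congr rfl fun τ _ => by ring
    _ ≤ ∑ σ, ν σ * c := sum_le_sum fun σ _ => mul_le_mul_of_nonneg_left (hc σ) (hν.1 σ)
    _ = c := by rw [← sum_mul, hν.2, one_mul]

end Mixing

theorem tvDist_kpow_Peps_le [Fintype V] [DecidableEq V] {J : V → V → ℝ} (h : V → ℝ)
    {β ε : ℝ} (hε : ε ∈ Set.Icc 0 1) (hβ : 0 ≤ β) (hJ : ∀ x, J x x = 0)
    {r : ℝ} (hr : ∀ y, (1 - ε) + ε * ∑ x, tanh (β * |J x y| / 2) ≤ r)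
    {ν : (V → Bool) → ℝ} (hν : ν ∈ stdSimplex ℝ (V → Bool))
    (hstat : ν ᵥ* Matrix.of (Peps J h β ε) = ν) (t : ℕ) (σ : V → Bool) :
    tvDist (kpow (Peps J h β ε) t σ) ν ≤ Fintype.card V * r ^ t := by
  have hP := Peps_mem_rowStochastic J h β hε
  rw [kpow_eq_pow]
  refine tvDist_le_of_vecMul_eq hν (Matrix.vecMul_pow_of_vecMul_eq hstat t) _ fun σ' => ?_
  refine tvDist_row_le (pow_mem hP t) (fun f hf => ?_) σ σ'
  simpa using FlipLipschitzWith.pow_mulVec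
    (fun L f hf => Peps_mulVec_flipLipschitz J h hε hβ hJ hr hf) t hf

theorem mul_pow_le_of_ceil_le {a r δ : ℝ} (ha : 0 < a) (hr0 : 0 < r) (hr1 : r < 1)
    (hδ : 0 < δ) {t : ℕ} (ht : ⌈(log a - log δ) / log (1 / r)⌉ ≤ (t : ℤ)) :
    a * r ^ t ≤ δ := by
  have hlog : 0 < log (1 / r) := log_pos (one_lt_one_div hr0 hr1)
  have ht' : log a - log δ ≤ t * log (1 / r) :=
    (div_le_iff₀ hlog).1 ((Int.le_ceil _).trans (by exact_mod_cast ht))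
  rw [← log_le_log_iff (by positivity) hδ, log_mul ha.ne' (by positivity), log_pow]
  rw [one_div, log_inv] at ht'
  linarith

/-- Mixing time of the ε-SCA: with
`r = (1−ε) + ε·max_u ∑_y tanh(β|J_{u,y}|/2)` and `0 < r < 1`, for any stationary
probability distribution π of the ε-SCA kernel, every δ > 0, and every
`t ≥ ⌈(log|V| − log δ)/log(1/r)⌉`, we have `max_σ ‖P^t_{β,ε}(σ,·) − π‖_TV ≤ δ`;
in particular `t_mix(δ) ≤ ⌈(log|V| − log δ)/log(1/r)⌉`. -/
theorem epsSCA_mixing_time [Fintype V] [DecidableEq V] [Nonempty V]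
    (G : SimpleGraph V) (J : V → V → ℝ) (h : V → ℝ)
    (hsym : ∀ x y, J x y = J y x)
    (hJG : ∀ x y, ¬ G.Adj x y → J x y = 0)
    (β : ℝ) (hβ : 0 ≤ β) (ε : ℝ) (hε : ε ∈ Set.Ioc (0 : ℝ) 1)
    (r : ℝ)
    (hr : r = (1 - ε) + ε * univ.sup' univ_nonempty (fun u => ∑ y, Real.tanh (β * |J u y| / 2)))
    (hr0 : 0 < r) (hr1 : r < 1)
    (pi : (V → Bool) → ℝ) (hpi0 : ∀ σ, 0 ≤ pi σ) (hpi1 : ∑ σ, pi σ = 1)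
    (hstat : ∀ τ, ∑ σ, pi σ * Peps J h β ε σ τ = pi τ) :
    (∀ δ : ℝ, 0 < δ → ∀ t : ℕ,
        (⌈(Real.log (Fintype.card V) - Real.log δ) / Real.log (1 / r)⌉ ≤ (t : ℤ)) →
        ∀ σ : V → Bool, tvDist (kpow (Peps J h β ε) t σ) pi ≤ δ) ∧
    (∀ δ : ℝ, 0 < δ →
        sInf {t : ℕ | ∀ σ : V → Bool, tvDist (kpow (Peps J h β ε) t σ) pi ≤ δ} ≤
          (⌈(Real.log (Fintype.card V) - Real.log δ) / Real.log (1 / r)⌉).toNat) := by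
  have hJ : ∀ x, J x x = 0 := fun x => hJG x x G.irrefl
  have hcol : ∀ y, (1 - ε) + ε * ∑ x, tanh (β * |J x y| / 2) ≤ r := fun y => by
    simp_rw [hr, hsym _ y]
    gcongr
    · exact hε.1.le
    · exact le_sup' (fun u => ∑ x, tanh (β * |J u x| / 2)) (mem_univ y)
  have hmix : ∀ δ : ℝ, 0 < δ → ∀ t : ℕ,
      ⌈(log (Fintype.card V) - log δ) / log (1 / r)⌉ ≤ (t : ℤ) →
      ∀ σ : V → Bool, tvDist (kpow (Peps J h β ε) t σ) pi ≤ δ := fun δ hδ t ht σ =>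
    (tvDist_kpow_Peps_le h (Set.Ioc_subset_Icc_self hε) hβ hJ hcol ⟨hpi0, hpi1⟩
      (funext hstat) t σ).trans
      (mul_pow_le_of_ceil_le (by exact_mod_cast Fintype.card_pos) hr0 hr1 hδ ht)
  exact ⟨hmix, fun δ hδ => Nat.sInf_le (hmix δ hδ _ (Int.self_le_toNat _))⟩
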